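/- Let G be a totally disconnected locally compact Hausdorff topological group, g ∈ G, and U a compact open subgroup that is tidy above for g. Then U is tidy for g if and only if L_U ⊆ U, where L_U is the closure of L̃_U = {x ∈ G : x ∈ gⁿUg⁻ⁿ for all but finitely many n ∈ ℤ}. -/

import Mathlib

open MeasureTheory Pointwise

variable {G : Type*}

/-- The conjugate subgroup `gUg⁻¹`. -/
def conjSubgroup [Group G] (g : G) (U : Subgroup G) : Subgroup G :=
  U.map (MulAut.conj g).toMonoidHom

/-- A subgroup is compact open if its carrier set is compact and open. -/
def Subgroup.IsCompactOpen [Group G] [TopologicalSpace G] (U : Subgroup G) : Prop :=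
  IsCompact (U : Set G) ∧ IsOpen (U : Set G)

/-- `U₊ = ⋂_{n ≥ 0} gⁿ U g⁻ⁿ`. -/
def plusSubgroup [Group G] (g : G) (U : Subgroup G) : Subgroup G :=
  ⨅ n : ℕ, conjSubgroup (g ^ n) U

/-- `U₋ = ⋂_{n ≥ 0} g⁻ⁿ U gⁿ`. -/
def minusSubgroup [Group G] (g : G) (U : Subgroup G) : Subgroup G :=
  ⨅ n : ℕ, conjSubgroup (g⁻¹ ^ n) U

/-- `U` is tidy above for `g` if `[gU₊g⁻¹ : U₊] = [gUg⁻¹ : gUg⁻¹ ∩ U]`. -/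
def TidyAbove [Group G] (g : G) (U : Subgroup G) : Prop :=
  (plusSubgroup g U).relIndex (conjSubgroup g (plusSubgroup g U)) = U.relIndex (conjSubgroup g U)

/-- `U₊₊ = ⋃_{n ≥ 0} gⁿ U₊ g⁻ⁿ` as a set. -/
def plusPlusSet [Group G] (g : G) (U : Subgroup G) : Set G :=
  ⋃ n : ℕ, ((conjSubgroup (g ^ n) (plusSubgroup g U) : Subgroup G) : Set G)

/-- `U₋₋ = ⋃_{n ≥ 0} g⁻ⁿ U₋ gⁿ` as a set. -/
def minusMinusSet [Group G] (g : G) (U : Subgroup G) : Set G :=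
  ⋃ n : ℕ, ((conjSubgroup (g⁻¹ ^ n) (minusSubgroup g U) : Subgroup G) : Set G)

/-- `U` is tidy below for `g` if `U₊₊` and `U₋₋` are closed. -/
def TidyBelow [Group G] [TopologicalSpace G] (g : G) (U : Subgroup G) : Prop :=
  IsClosed (plusPlusSet g U) ∧ IsClosed (minusMinusSet g U)

/-- `U` is tidy for `g` if it is tidy above and tidy below for `g`. -/
def Tidy [Group G] [TopologicalSpace G] (g : G) (U : Subgroup G) : Prop :=
  TidyAbove g U ∧ TidyBelow g U

/-!
If `U₊₊` is closed, Baire's theorem in the compact group `U₊₊ ∩ U` makes the increasing chain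
`gⁿU₊g⁻ⁿ ∩ U` stabilise at some `gᴹU₊g⁻ᴹ ∩ U`. Conjugating `x ∈ L̃_U` by a large power of `g`
puts it into `U₊₊ ∩ U`, and conjugating back shows `x ∈ U₊`; hence `L_U ⊆ U₊ ⊆ U`.

Conversely, tidiness above yields the factorisation `U = U₊U₋`. If `L_U ⊆ U`, then `L̃_U`, being
invariant under conjugation by `g`, lies in `U₊ ∩ U₋`. For `x = ab ∈ gⁿU₊g⁻ⁿ ∩ U` with `a ∈ U₊`,
`b ∈ U₋`, the factor `b` lies in `gⁿU₊g⁻ⁿ ∩ U₋ ⊆ L̃_U ⊆ U₊`, so `U₊₊ ∩ U = U₊` is closed; a subgroup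
meeting an open subgroup in a closed set is closed. For `U₋₋` apply the same to `g⁻¹`.
-/

namespace Subgroup

variable [Group G]

theorem coe_subset_mul_of_relIndex_eq {A S T : Subgroup G} (hAS : A ≤ S)
    (hTS : T.relIndex S ≠ 0) (hTA : T.relIndex A = T.relIndex S) : (S : Set G) ⊆ A * T := by
  have : Finite (S ⧸ T.subgroupOf S) := Nat.finite_of_card_ne_zero hTS
  have hbij : Function.Bijective (quotientSubgroupOfEmbeddingOfLE T hAS) :=
    (Nat.bijective_iff_injective_and_card _).2 ⟨Function.Embedding.injective _, hTA⟩
  intro s hs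
  obtain ⟨q, hq⟩ := hbij.2 (QuotientGroup.mk ⟨s, hs⟩)
  obtain ⟨a, rfl⟩ := QuotientGroup.mk_surjective q
  rw [quotientSubgroupOfEmbeddingOfLE_apply_mk, QuotientGroup.eq, mem_subgroupOf] at hq
  exact ⟨a, a.2, (a : G)⁻¹ * s, hq, mul_inv_cancel_left _ _⟩

variable [TopologicalSpace G] [IsTopologicalGroup G]

theorem relIndex_ne_zero_of_isOpen_of_isCompact {H K : Subgroup G} (hH : IsOpen (H : Set G))
    (hK : IsCompact (K : Set G)) : H.relIndex K ≠ 0 := by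
  have : CompactSpace K := isCompact_iff_compactSpace.1 hK
  have : Finite (K ⧸ H.subgroupOf K) :=
    quotient_finite_of_isOpen _ (hH.preimage continuous_subtype_val)
  exact index_ne_zero_of_finite

theorem isClosed_of_isClosed_inf_of_isOpen {H U : Subgroup G} (hU : IsOpen (U : Set G))
    (hHU : IsClosed ((H ⊓ U : Subgroup G) : Set G)) : IsClosed (H : Set G) := by
  refine closure_subset_iff_isClosed.1 fun x hx => ?_
  obtain ⟨h, hxh, hh⟩ := mem_closure_iff.1 hx {y | x⁻¹ * y ∈ U}
    (hU.preimage (continuous_const_mul x⁻¹)) (by simp)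
  have hU' : h⁻¹ * x ∈ U := by simpa using U.inv_mem hxh
  have hcl : h⁻¹ * x ∈ _root_.closure (H : Set G) :=
    H.topologicalClosure.mul_mem (H.le_topologicalClosure (H.inv_mem hh)) hx
  have : h⁻¹ * x ∈ H ⊓ U := by
    rw [← SetLike.mem_coe, ← hHU.closure_eq, coe_inf, Set.inter_comm]
    exact hU.inter_closure ⟨hU', hcl⟩
  simpa using H.mul_mem hh this.1

/-- By Baire one of the `H n` is open in `K`, and then compactness bounds the sequence. -/
theorem exists_le_of_isCompact_of_subset_iUnion [T2Space G] {K : Subgroup G}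
    (hK : IsCompact (K : Set G)) {H : ℕ → Subgroup G} (hH : Monotone H)
    (hHc : ∀ n, IsClosed (H n : Set G)) (hKH : (K : Set G) ⊆ ⋃ n, (H n : Set G)) :
    ∃ n, K ≤ H n := by
  have : CompactSpace K := isCompact_iff_compactSpace.1 hK
  have hcov : ⋃ n, ((H n).subgroupOf K : Set K) = Set.univ :=
    Set.eq_univ_of_forall fun x => by simpa [coe_subgroupOf] using hKH x.2
  obtain ⟨N, x, hx⟩ := nonempty_interior_of_iUnion_of_closed
    (fun n => (hHc n).preimage continuous_subtype_val) hcov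
  have hopen : IsOpen ((H N).subgroupOf K : Set K) :=
    isOpen_of_mem_nhds _ (mem_interior_iff_mem_nhds.1 hx)
  have hcov' : Set.univ ⊆ ⋃ n, ((H (N + n)).subgroupOf K : Set K) := fun x _ => by
    obtain ⟨m, hm⟩ := Set.mem_iUnion.1 (hcov.symm ▸ Set.mem_univ x)
    exact Set.mem_iUnion.2 ⟨m, hH (Nat.le_add_left m N) hm⟩
  have hmono : Monotone fun n => (H (N + n)).subgroupOf K := fun m n h x hx =>
    hH (Nat.add_le_add_left h N) hx
  obtain ⟨n, hn⟩ := isCompact_univ.elim_directed_cover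
    (fun n => ((H (N + n)).subgroupOf K : Set K))
    (fun n => isOpen_mono (hmono (Nat.zero_le n)) hopen) hcov' hmono.directed_le
  exact ⟨N + n, fun x hx => hn (Set.mem_univ ⟨x, hx⟩)⟩

end Subgroup

section Conj

variable [Group G]

theorem mem_conjSubgroup {a x : G} {H : Subgroup G} : x ∈ conjSubgroup a H ↔ a⁻¹ * x * a ∈ H := by
  rw [conjSubgroup, Subgroup.mem_map_equiv, MulAut.conj_symm_apply]

theorem conjSubgroup_conjSubgroup (a b : G) (H : Subgroup G) :
    conjSubgroup a (conjSubgroup b H) = conjSubgroup (a * b) H := by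
  ext x
  simp only [mem_conjSubgroup, mul_inv_rev, mul_assoc]

@[simp]
theorem conjSubgroup_one (H : Subgroup G) : conjSubgroup 1 H = H := by
  ext x
  simp [mem_conjSubgroup]

theorem conjSubgroup_mono (a : G) : Monotone (conjSubgroup a) := fun _ _ h => Subgroup.map_mono h

theorem relIndex_conjSubgroup (a : G) (H K : Subgroup G) :
    (conjSubgroup a H).relIndex (conjSubgroup a K) = H.relIndex K :=
  Subgroup.relIndex_map_map_of_injective H K (MulAut.conj a).injective

theorem coe_conjSubgroup (a : G) (H : Subgroup G) :
    (conjSubgroup a H : Set G) = (fun x => a⁻¹ * x * a) ⁻¹' H := by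
  ext x
  exact mem_conjSubgroup

variable [TopologicalSpace G] [IsTopologicalGroup G]

theorem isOpen_conjSubgroup {H : Subgroup G} (hH : IsOpen (H : Set G)) (a : G) :
    IsOpen (conjSubgroup a H : Set G) := by
  rw [coe_conjSubgroup]
  exact hH.preimage (by fun_prop)

theorem isClosed_conjSubgroup {H : Subgroup G} (hH : IsClosed (H : Set G)) (a : G) :
    IsClosed (conjSubgroup a H : Set G) := by
  rw [coe_conjSubgroup]
  exact hH.preimage (by fun_prop)

end Conj

section PlusMinus

variable [Group G] {g x : G} {U : Subgroup G}

theorem mem_plusSubgroup : x ∈ plusSubgroup g U ↔ ∀ n : ℕ, x ∈ conjSubgroup (g ^ n) U :=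
  Subgroup.mem_iInf

theorem mem_conjSubgroup_plusSubgroup {a : G} :
    x ∈ conjSubgroup a (plusSubgroup g U) ↔ ∀ n : ℕ, x ∈ conjSubgroup (a * g ^ n) U := by
  simp only [mem_conjSubgroup, mem_plusSubgroup, mul_inv_rev, mul_assoc]

theorem mem_minusSubgroup : x ∈ minusSubgroup g U ↔ ∀ n : ℕ, x ∈ conjSubgroup (g ^ (-n : ℤ)) U := by
  simp only [minusSubgroup, Subgroup.mem_iInf, zpow_neg, zpow_natCast, inv_pow]

theorem plusSubgroup_inv : plusSubgroup g⁻¹ U = minusSubgroup g U := rfl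

theorem minusSubgroup_inv : minusSubgroup g⁻¹ U = plusSubgroup g U := by
  simp only [minusSubgroup, plusSubgroup, inv_inv]

theorem coe_subset_minusSubgroup_mul_plusSubgroup
    (h : (U : Set G) ⊆ plusSubgroup g U * minusSubgroup g U) :
    (U : Set G) ⊆ minusSubgroup g U * plusSubgroup g U := fun x hx => by
  obtain ⟨a, ha, b, hb, hab⟩ := h (U.inv_mem hx)
  exact ⟨b⁻¹, inv_mem hb, a⁻¹, inv_mem ha, by simp only at hab ⊢; rw [← mul_inv_rev, hab, inv_inv]⟩

variable (g U)

theorem plusSubgroup_le : plusSubgroup g U ≤ U := fun x hx => by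
  simpa using mem_plusSubgroup.1 hx 0

theorem plusSubgroup_le_conjSubgroup : plusSubgroup g U ≤ conjSubgroup g (plusSubgroup g U) :=
  fun x hx => mem_conjSubgroup_plusSubgroup.2 fun n => by
    rw [← pow_succ']
    exact mem_plusSubgroup.1 hx (n + 1)

theorem conjSubgroup_plusSubgroup_inf :
    conjSubgroup g (plusSubgroup g U) ⊓ U = plusSubgroup g U := by
  refine le_antisymm (fun x ⟨hxP, hxU⟩ => mem_plusSubgroup.2 fun n => ?_)
    (le_inf (plusSubgroup_le_conjSubgroup g U) (plusSubgroup_le g U))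
  cases n with
  | zero => simpa using hxU
  | succ n => simpa only [pow_succ'] using mem_conjSubgroup_plusSubgroup.1 hxP n

theorem monotone_conjSubgroup_zpow_plusSubgroup :
    Monotone fun n : ℤ => conjSubgroup (g ^ n) (plusSubgroup g U) :=
  monotone_int_of_le_succ fun n => by
    simp only [zpow_add_one, ← conjSubgroup_conjSubgroup]
    exact conjSubgroup_mono _ (plusSubgroup_le_conjSubgroup g U)

theorem monotone_conjSubgroup_pow_plusSubgroup :
    Monotone fun n : ℕ => conjSubgroup (g ^ n) (plusSubgroup g U) := fun m n h => by
  simpa only [zpow_natCast] using monotone_conjSubgroup_zpow_plusSubgroup g U (Nat.cast_le.2 h)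

def plusPlusSubgroup : Subgroup G :=
  ⨆ n : ℕ, conjSubgroup (g ^ n) (plusSubgroup g U)

theorem coe_plusPlusSubgroup : (plusPlusSubgroup g U : Set G) = plusPlusSet g U :=
  Subgroup.coe_iSup_of_directed (monotone_conjSubgroup_pow_plusSubgroup g U).directed_le

theorem isClosed_plusSubgroup [TopologicalSpace G] [IsTopologicalGroup G]
    (hU : IsClosed (U : Set G)) : IsClosed (plusSubgroup g U : Set G) := by
  rw [plusSubgroup, Subgroup.coe_iInf]
  exact isClosed_iInter fun n => isClosed_conjSubgroup hU _

def lTilde : Set G :=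
  {x : G | {n : ℤ | x ∉ conjSubgroup (g ^ n) U}.Finite}

theorem lTilde_inv : lTilde g⁻¹ U = lTilde g U := by
  ext x
  have : {n : ℤ | x ∉ conjSubgroup (g⁻¹ ^ n) U} = -{n : ℤ | x ∉ conjSubgroup (g ^ n) U} := by
    ext n
    simp [inv_zpow']
  simp only [lTilde, Set.mem_ofPred_eq, this, Set.finite_neg]

variable {g U}

theorem conj_mem_lTilde (hx : x ∈ lTilde g U) (m : ℤ) : (g ^ m)⁻¹ * x * g ^ m ∈ lTilde g U := by
  refine (hx.preimage (add_right_injective m).injOn).subset fun n hn => ?_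
  simpa [mem_conjSubgroup, zpow_add, mul_assoc] using hn

theorem lTilde_subset_plusSubgroup_of_subset (hL : lTilde g U ⊆ U) :
    lTilde g U ⊆ plusSubgroup g U := fun x hx => mem_plusSubgroup.2 fun n => by
  simpa using mem_conjSubgroup.2 (hL (conj_mem_lTilde hx n))

theorem conjSubgroup_plusSubgroup_inf_minusSubgroup_subset_lTilde (n : ℕ) :
    (conjSubgroup (g ^ n) (plusSubgroup g U) ⊓ minusSubgroup g U : Set G) ⊆ lTilde g U := by
  rintro x ⟨hxP, hxM⟩
  refine (Set.finite_Ioo (0 : ℤ) n).subset fun k hk => ?_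
  by_contra hkn
  apply hk
  rcases le_or_gt k 0 with hk0 | hk0
  · rw [show k = -((-k).toNat : ℤ) by omega]
    exact mem_minusSubgroup.1 hxM _
  · have hnk : g ^ k = g ^ n * g ^ (k - n).toNat := by
      rw [← zpow_natCast, ← zpow_natCast, ← zpow_add]
      congr 1
      simp only [Set.mem_Ioo, not_and, not_lt] at hkn
      omega
    rw [hnk]
    exact mem_conjSubgroup_plusSubgroup.1 hxP _

theorem exists_forall_mem_conjSubgroup_of_mem_lTilde (hx : x ∈ lTilde g U) (M : ℕ) :
    ∃ N : ℕ, M ≤ N ∧ ∀ n : ℤ, N ≤ |n| → x ∈ conjSubgroup (g ^ n) U := by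
  obtain ⟨b, hb⟩ := (hx.image abs).bddAbove
  refine ⟨max M (b.toNat + 1), le_max_left _ _, fun n hn => ?_⟩
  by_contra hxn
  have := hb ⟨n, hxn, rfl⟩
  omega

end PlusMinus

section TidyAbove

variable [Group G] (g : G) (U : Subgroup G)

/-- `minusChain g U m = ⋂_{k ≤ m} g⁻ᵏ U gᵏ`, a decreasing sequence with intersection `U₋`. -/
def minusChain : ℕ → Subgroup G
  | 0 => U
  | m + 1 => conjSubgroup g⁻¹ (minusChain m) ⊓ U

theorem minusChain_succ_le : ∀ m, minusChain g U (m + 1) ≤ minusChain g U m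
  | 0 => inf_le_right
  | m + 1 => inf_le_inf_right U (conjSubgroup_mono g⁻¹ (minusChain_succ_le m))

theorem minusChain_le_conjSubgroup : ∀ m, minusChain g U m ≤ conjSubgroup (g⁻¹ ^ m) U
  | 0 => by simp [minusChain]
  | m + 1 => by
    rw [pow_succ', ← conjSubgroup_conjSubgroup]
    exact inf_le_left.trans (conjSubgroup_mono g⁻¹ (minusChain_le_conjSubgroup m))

theorem isClosed_minusChain [TopologicalSpace G] [IsTopologicalGroup G]
    (hU : IsClosed (U : Set G)) : ∀ m, IsClosed (minusChain g U m : Set G)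
  | 0 => hU
  | m + 1 => (isClosed_conjSubgroup (isClosed_minusChain hU m) g⁻¹).inter hU

variable {g U}

/-- Since `gU₊g⁻¹ ∩ U = U₊`, tidiness above says `[U₊ : U₊ ∩ g⁻¹Ug] = [U : U ∩ g⁻¹Ug]`. -/
theorem coe_subset_plusSubgroup_mul_minusChain_one [TopologicalSpace G] [IsTopologicalGroup G]
    (hU : U.IsCompactOpen) (hta : TidyAbove g U) :
    (U : Set G) ⊆ plusSubgroup g U * minusChain g U 1 := by
  have hconj : ∀ H K : Subgroup G,
      (conjSubgroup g⁻¹ H).relIndex K = H.relIndex (conjSubgroup g K) := fun H K => by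
    rw [← relIndex_conjSubgroup g, conjSubgroup_conjSubgroup, mul_inv_cancel, conjSubgroup_one]
  refine Subgroup.coe_subset_mul_of_relIndex_eq (plusSubgroup_le g U) ?_ ?_
  · rw [minusChain, minusChain, Subgroup.inf_relIndex_right]
    exact Subgroup.relIndex_ne_zero_of_isOpen_of_isCompact (isOpen_conjSubgroup hU.2 _) hU.1
  · rw [minusChain, minusChain]
    calc (conjSubgroup g⁻¹ U ⊓ U).relIndex (plusSubgroup g U)
        = (conjSubgroup g⁻¹ U).relIndex (plusSubgroup g U) := by
          rw [← Subgroup.relIndex_inf_mul_relIndex, inf_eq_right.2 (plusSubgroup_le g U),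
            Subgroup.relIndex_eq_one.2 (plusSubgroup_le g U), mul_one]
      _ = (conjSubgroup g (plusSubgroup g U) ⊓ U).relIndex (conjSubgroup g (plusSubgroup g U)) := by
          rw [hconj, inf_comm, Subgroup.inf_relIndex_right]
      _ = U.relIndex (conjSubgroup g U) := by rw [conjSubgroup_plusSubgroup_inf, hta]
      _ = (conjSubgroup g⁻¹ U ⊓ U).relIndex U := by rw [Subgroup.inf_relIndex_right, hconj]

theorem minusChain_subset_plusSubgroup_mul
    (h1 : (U : Set G) ⊆ plusSubgroup g U * minusChain g U 1) :
    ∀ m, (minusChain g U m : Set G) ⊆ plusSubgroup g U * minusChain g U (m + 1)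
  | 0 => h1
  | m + 1 => by
    rintro r ⟨hr, hrU⟩
    obtain ⟨p, hp, s, hs, hps⟩ := minusChain_subset_plusSubgroup_mul h1 m (mem_conjSubgroup.1 hr)
    have ha : g⁻¹ * p * g ∈ plusSubgroup g U :=
      mem_conjSubgroup.1 (plusSubgroup_le_conjSubgroup g U hp)
    have hr' : r = (g⁻¹ * p * g) * (g⁻¹ * s * g) := by
      calc r = g⁻¹ * (g⁻¹⁻¹ * r * g⁻¹) * g := by group
        _ = _ := by rw [← hps]; group
    refine ⟨_, ha, g⁻¹ * s * g, Subgroup.mem_inf.2 ⟨?_, ?_⟩, hr'.symm⟩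
    · rw [mem_conjSubgroup]
      simpa [mul_assoc] using hs
    · rw [show g⁻¹ * s * g = (g⁻¹ * p * g)⁻¹ * r by rw [hr']; group]
      exact U.mul_mem (U.inv_mem (plusSubgroup_le g U ha)) hrU

theorem coe_subset_plusSubgroup_mul_minusChain
    (h1 : (U : Set G) ⊆ plusSubgroup g U * minusChain g U 1) :
    ∀ m, (U : Set G) ⊆ plusSubgroup g U * minusChain g U m
  | 0 => fun x hx => ⟨1, one_mem _, x, hx, one_mul x⟩
  | m + 1 => by
    refine (coe_subset_plusSubgroup_mul_minusChain h1 m).trans ?_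
    refine (Set.mul_subset_mul_left (minusChain_subset_plusSubgroup_mul h1 m)).trans ?_
    rw [← mul_assoc, coe_mul_coe]

/-- The factor in `U₋` is found by compactness from the factorisations
`U = U₊ · minusChain g U m`. -/
theorem coe_subset_plusSubgroup_mul_minusSubgroup [TopologicalSpace G] [IsTopologicalGroup G]
    (hU : U.IsCompactOpen) (hta : TidyAbove g U) :
    (U : Set G) ⊆ plusSubgroup g U * minusSubgroup g U := by
  intro x hx
  have hUc := U.isClosed_of_isOpen hU.2
  have hPM := coe_subset_plusSubgroup_mul_minusChain
    (coe_subset_plusSubgroup_mul_minusChain_one hU hta)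
  let F : ℕ → Set G := fun m => minusChain g U m ∩ {b | x * b⁻¹ ∈ plusSubgroup g U}
  have hF : ∀ m, (F m).Nonempty := fun m => by
    obtain ⟨a, ha, b, hb, rfl⟩ := hPM m hx
    exact ⟨b, hb, by simpa using ha⟩
  have hFc : ∀ m, IsClosed (F m) := fun m => (isClosed_minusChain g U hUc m).inter
    ((isClosed_plusSubgroup g U hUc).preimage (by fun_prop))
  obtain ⟨b, hb⟩ := IsCompact.nonempty_iInter_of_sequence_nonempty_isCompact_isClosed F
    (fun m => Set.inter_subset_inter_left _ (minusChain_succ_le g U m)) hF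
    (hU.1.of_isClosed_subset (hFc 0) Set.inter_subset_left) hFc
  rw [Set.mem_iInter] at hb
  have hbM : b ∈ minusSubgroup g U :=
    Subgroup.mem_iInf.2 fun m => minusChain_le_conjSubgroup g U m (hb m).1
  exact ⟨x * b⁻¹, (hb 0).2, b, hbM, inv_mul_cancel_right x b⟩

end TidyAbove

section TidyBelow

variable [Group G] {g : G} {U : Subgroup G}

theorem plusPlusSubgroup_inf_eq_plusSubgroup
    (hPM : (U : Set G) ⊆ plusSubgroup g U * minusSubgroup g U) (hL : lTilde g U ⊆ U) :
    plusPlusSubgroup g U ⊓ U = plusSubgroup g U := by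
  refine le_antisymm (fun x hx => ?_)
    (le_inf (le_iSup_of_le 0 (by simp)) (plusSubgroup_le g U))
  obtain ⟨hxPP, hxU⟩ := Subgroup.mem_inf.1 hx
  obtain ⟨n, hn⟩ := Set.mem_iUnion.1 ((coe_plusPlusSubgroup g U).subst (motive := (x ∈ ·)) hxPP)
  obtain ⟨a, ha, b, hb, rfl⟩ := hPM hxU
  have hbP : b ∈ conjSubgroup (g ^ n) (plusSubgroup g U) := by
    have ha' := monotone_conjSubgroup_pow_plusSubgroup g U (Nat.zero_le n) (by simpa using ha)
    simpa using Subgroup.mul_mem _ (Subgroup.inv_mem _ ha') hn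
  exact Subgroup.mul_mem _ ha <| lTilde_subset_plusSubgroup_of_subset hL <|
    conjSubgroup_plusSubgroup_inf_minusSubgroup_subset_lTilde n ⟨hbP, hb⟩

variable [TopologicalSpace G] [IsTopologicalGroup G]

theorem isClosed_plusPlusSet (hU : IsOpen (U : Set G))
    (hPM : (U : Set G) ⊆ plusSubgroup g U * minusSubgroup g U) (hL : lTilde g U ⊆ U) :
    IsClosed (plusPlusSet g U) := by
  rw [← coe_plusPlusSubgroup]
  refine Subgroup.isClosed_of_isClosed_inf_of_isOpen hU ?_
  rw [plusPlusSubgroup_inf_eq_plusSubgroup hPM hL]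
  exact isClosed_plusSubgroup g U (U.isClosed_of_isOpen hU)

/-- Baire's theorem in the compact group `U₊₊ ∩ U` gives `M` with `U₊₊ ∩ U ⊆ gᴹU₊g⁻ᴹ`; an element
of `L̃_U`, moved far enough along its `g`-orbit, lands in `U₊₊ ∩ U`. -/
theorem lTilde_subset_plusSubgroup [T2Space G] (hU : U.IsCompactOpen)
    (hpp : IsClosed (plusPlusSet g U)) : lTilde g U ⊆ plusSubgroup g U := by
  have hUc := U.isClosed_of_isOpen hU.2
  have hK : ((plusPlusSubgroup g U ⊓ U : Subgroup G) : Set G) = plusPlusSet g U ∩ U := by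
    rw [Subgroup.coe_inf, coe_plusPlusSubgroup]
  obtain ⟨M, hM⟩ := Subgroup.exists_le_of_isCompact_of_subset_iUnion
    (hU.1.of_isClosed_subset (hK ▸ hpp.inter hUc) (hK ▸ Set.inter_subset_right))
    (monotone_conjSubgroup_pow_plusSubgroup g U)
    (fun n => isClosed_conjSubgroup (isClosed_plusSubgroup g U hUc) _)
    (hK ▸ Set.inter_subset_left)
  intro x hx
  obtain ⟨N, hMN, hN⟩ := exists_forall_mem_conjSubgroup_of_mem_lTilde hx M
  have hxP : x ∈ conjSubgroup (g ^ N) (plusSubgroup g U) :=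
    mem_conjSubgroup_plusSubgroup.2 fun k => by
      rw [← pow_add, ← zpow_natCast]
      exact hN _ (le_abs.2 (.inl (by omega)))
  set v := g ^ N * x * (g ^ N)⁻¹ with hv
  have hvU : v ∈ U := by
    simpa [mem_conjSubgroup] using hN (-N) (by simp)
  have hvP : v ∈ conjSubgroup (g ^ (N + N)) (plusSubgroup g U) := by
    rw [pow_add, ← conjSubgroup_conjSubgroup, mem_conjSubgroup]
    simpa [hv, mul_assoc] using hxP
  have hvM : v ∈ conjSubgroup (g ^ M) (plusSubgroup g U) :=
    hM ⟨(coe_plusPlusSubgroup g U).symm ▸ Set.mem_iUnion.2 ⟨N + N, hvP⟩, hvU⟩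
  have hx' : x ∈ conjSubgroup (g ^ ((M : ℤ) - N)) (plusSubgroup g U) := by
    rw [mem_conjSubgroup] at hvM ⊢
    convert hvM using 1
    rw [hv, zpow_sub, zpow_natCast, zpow_natCast]
    group
  simpa using monotone_conjSubgroup_zpow_plusSubgroup g U (by omega : (M : ℤ) - N ≤ 0) hx'

end TidyBelow

theorem tidy_iff_LU_subset_general
    [Group G] [TopologicalSpace G] [IsTopologicalGroup G] [T2Space G]
    (g : G) (U : Subgroup G) (hU : U.IsCompactOpen) (hta : TidyAbove g U) :
    Tidy g U ↔
      closure {x : G | {n : ℤ | x ∉ conjSubgroup (g ^ n) U}.Finite} ⊆ (U : Set G) := by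
  change Tidy g U ↔ closure (lTilde g U) ⊆ U
  constructor
  · rintro ⟨-, hpp, -⟩
    exact closure_minimal ((lTilde_subset_plusSubgroup hU hpp).trans (plusSubgroup_le g U))
      (U.isClosed_of_isOpen hU.2)
  · intro hL
    have hLU : lTilde g U ⊆ U := subset_closure.trans hL
    have hPM := coe_subset_plusSubgroup_mul_minusSubgroup hU hta
    refine ⟨hta, isClosed_plusPlusSet hU.2 hPM hLU, isClosed_plusPlusSet (g := g⁻¹) hU.2 ?_ ?_⟩
    · rw [plusSubgroup_inv, minusSubgroup_inv]
      exact coe_subset_minusSubgroup_mul_plusSubgroup hPM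
    · rwa [lTilde_inv]

/-- If `U` is tidy above for `g`, then `U` is tidy for `g` iff
`L_U = closure L̃_U ⊆ U`. -/
theorem tidy_iff_LU_subset
    [Group G] [TopologicalSpace G] [IsTopologicalGroup G] [LocallyCompactSpace G] [T2Space G]
    [TotallyDisconnectedSpace G]
    (g : G) (U : Subgroup G) (hU : U.IsCompactOpen) (hta : TidyAbove g U) :
    Tidy g U ↔
      closure {x : G | {n : ℤ | x ∉ conjSubgroup (g ^ n) U}.Finite} ⊆ (U : Set G) :=
  tidy_iff_LU_subset_general g U hU hta
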